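/- arXiv:2303.14058 — 5 statements merged into one kernel-verified Lean document; each statement's English description precedes it below -/
import Mathlib

section
/- Let P, X, Y be real Hilbert spaces, let D be a nonempty open ball in P centered at a point p†, let F : X → Y be a bounded linear operator, and let Ψ : D → X be Fréchet differentiable such that for every p ∈ D the derivative Ψ'(p) : P → X is a continuous linear equivalence (bijective with bounded inverse). Set N := F ∘ Ψ, so N'(p) = F ∘ Ψ'(p) for p ∈ D. Then for all p₁, p₂ ∈ D one has the order-reversed tangential cone factorization N'(p₂) = N'(p₁) ∘ R_{p₂,p₁} with R_{p₂,p₁} := Ψ'(p₁)⁻¹ ∘ Ψ'(p₂). If in addition there exist constants C_I, C_L > 0 with ‖Ψ'(p)⁻¹‖ ≤ C_I for all p ∈ D and ‖Ψ'(p) − Ψ'(q)‖ ≤ C_L‖p − q‖ for all p, q ∈ D, then ‖R_{p₂,p₁} − I‖ ≤ C_I C_L ‖p₂ − p₁‖ for all p₁, p₂ ∈ D. -/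
/-- second decomposition case implies the order-reversed tangential
cone factorization `N'(p₂) = N'(p₁) ∘ R_{p₂,p₁}` with `R_{p₂,p₁} = Ψ'(p₁)⁻¹ ∘ Ψ'(p₂)`,
and under uniform bounds on `Ψ'(p)⁻¹` and Lipschitz continuity of `Ψ'` the bound
`‖R_{p₂,p₁} − I‖ ≤ C_I C_L ‖p₂ − p₁‖` holds. -/
theorem stmt0
    {P X Y : Type*}
    [NormedAddCommGroup P] [InnerProductSpace ℝ P] [CompleteSpace P]
    [NormedAddCommGroup X] [InnerProductSpace ℝ X] [CompleteSpace X]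
    [NormedAddCommGroup Y] [InnerProductSpace ℝ Y] [CompleteSpace Y]
    (pdag : P) (r : ℝ) (hr : 0 < r)
    (F : X →L[ℝ] Y)
    (Ψ : P → X) (Ψ' : P → (P ≃L[ℝ] X))
    (hΨ : ∀ p ∈ Metric.ball pdag r, HasFDerivAt Ψ (Ψ' p : P →L[ℝ] X) p)
    (N : P → Y) (hN : ∀ p ∈ Metric.ball pdag r, N p = F (Ψ p)) :
    (∀ p₁ ∈ Metric.ball pdag r, ∀ p₂ ∈ Metric.ball pdag r,
      F.comp (Ψ' p₂ : P →L[ℝ] X)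
        = (F.comp (Ψ' p₁ : P →L[ℝ] X)).comp
            (((Ψ' p₁).symm : X →L[ℝ] P).comp (Ψ' p₂ : P →L[ℝ] X))) ∧
    (∀ C_I C_L : ℝ, 0 < C_I → 0 < C_L →
      (∀ p ∈ Metric.ball pdag r, ‖((Ψ' p).symm : X →L[ℝ] P)‖ ≤ C_I) →
      (∀ p ∈ Metric.ball pdag r, ∀ q ∈ Metric.ball pdag r,
        ‖(Ψ' p : P →L[ℝ] X) - (Ψ' q : P →L[ℝ] X)‖ ≤ C_L * ‖p - q‖) →
      ∀ p₁ ∈ Metric.ball pdag r, ∀ p₂ ∈ Metric.ball pdag r,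
        ‖((Ψ' p₁).symm : X →L[ℝ] P).comp (Ψ' p₂ : P →L[ℝ] X)
            - ContinuousLinearMap.id ℝ P‖ ≤ C_I * C_L * ‖p₂ - p₁‖) := by
  constructor
  · intro p₁ _ p₂ _
    ext v
    simp
  · intro C_I C_L hCI hCL hI hL p₁ hp₁ p₂ hp₂
    have key : ((Ψ' p₁).symm : X →L[ℝ] P).comp (Ψ' p₂ : P →L[ℝ] X)
        - ContinuousLinearMap.id ℝ P
        = ((Ψ' p₁).symm : X →L[ℝ] P).comp
            ((Ψ' p₂ : P →L[ℝ] X) - (Ψ' p₁ : P →L[ℝ] X)) := by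
      ext v; simp
    rw [key]
    calc ‖((Ψ' p₁).symm : X →L[ℝ] P).comp
            ((Ψ' p₂ : P →L[ℝ] X) - (Ψ' p₁ : P →L[ℝ] X))‖
        ≤ ‖((Ψ' p₁).symm : X →L[ℝ] P)‖ *
            ‖(Ψ' p₂ : P →L[ℝ] X) - (Ψ' p₁ : P →L[ℝ] X)‖ :=
          ContinuousLinearMap.opNorm_comp_le _ _
      _ ≤ C_I * (C_L * ‖p₂ - p₁‖) := by
          apply mul_le_mul (hI p₁ hp₁) (hL p₂ hp₂ p₁ hp₁) (norm_nonneg _)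
            hCI.le
      _ = C_I * C_L * ‖p₂ - p₁‖ := by ring
end

section
/- Let D ⊆ ℝⁿ be a nonempty open convex set and N : D → ℝⁿ be continuously Fréchet differentiable such that N'(p) is invertible for every p ∈ D and the Newton–Mysovskii condition holds: there is C_N > 0 with ‖N'(q)⁻¹ (N'(p + s(q − p)) − N'(p)) (q − p)‖ ≤ s C_N ‖p − q‖² for all p, q ∈ D and s ∈ [0,1]. Let y ∈ ℝⁿ, let p† ∈ D satisfy N(p†) = y, and let p⁰ ∈ D be such that, with ρ := ‖p† − p⁰‖, the closed ball of radius ρ centered at p† is contained in D and h := ρ C_N / 2 < 1. Then the Newton iterates p^{k+1} = p^k − N'(p^k)⁻¹ (N(p^k) − y) are well defined, remain in the closed ball of radius ρ around p†, satisfy ‖p^{k+1} − p†‖ ≤ (C_N/2) ‖p^k − p†‖² and ‖p^k − p†‖ ≤ h^k ρ for all k, and hence converge quadratically to p†. -/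
/-!
Write `v = p† - p` and `Φ = N'(p)⁻¹`. The Newton error is `g 1 - g 0` for the path
`g s = Φ (N (p + s v)) - s v`, whose derivative `Φ (N'(p + s v) - N'(p)) v` has norm at most
`s C_N ‖v‖²` by the Newton–Mysovskii condition (applied with the roles of the two points swapped,
so that the inverse is taken at `p`). Integrating gives `‖p⁺ - p†‖ ≤ (C_N/2) ‖p - p†‖²`; with
`h = ρ C_N / 2 < 1` an induction then keeps the iterates in the ball and yields
`‖pᵏ - p†‖ ≤ hᵏ ρ`.
-/

open Set Metric

section Newton

variable {E : Type*} [NormedAddCommGroup E] [NormedSpace ℝ E]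

theorem norm_sub_le_of_norm_deriv_le_mul {f f' : ℝ → E} {K : ℝ}
    (hf : ∀ s ∈ Icc (0 : ℝ) 1, HasDerivAt f (f' s) s) (bound : ∀ s ∈ Ico (0 : ℝ) 1, ‖f' s‖ ≤ K * s) :
    ‖f 1 - f 0‖ ≤ K / 2 := by
  have hB (s : ℝ) : HasDerivAt (fun s => K / 2 * s ^ 2) (K * s) s :=
    ((hasDerivAt_pow 2 s).const_mul (K / 2)).congr_deriv (by push_cast; ring)
  simpa using image_norm_le_of_norm_deriv_right_le_deriv_boundary (f := fun s => f s - f 0)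
    (fun s hs => ((hf s hs).sub_const (f 0)).continuousAt.continuousWithinAt)
    (fun s hs => ((hf s (Ico_subset_Icc_self hs)).sub_const (f 0)).hasDerivWithinAt)
    (by simp) hB bound (right_mem_Icc.2 zero_le_one)

def NewtonMysovskii (D : Set E) (N' : E → E ≃L[ℝ] E) (C : ℝ) : Prop :=
  ∀ p ∈ D, ∀ q ∈ D, ∀ s ∈ Icc (0 : ℝ) 1,
    ‖(N' q).symm (((N' (p + s • (q - p)) : E →L[ℝ] E) - N' p) (q - p))‖ ≤ s * C * ‖p - q‖ ^ 2

def newtonStep (N : E → E) (N' : E → E ≃L[ℝ] E) (y p : E) : E :=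
  p - (N' p).symm (N p - y)

theorem NewtonMysovskii.norm_symm_sub_apply_le {D : Set E} {N' : E → E ≃L[ℝ] E} {C : ℝ}
    (hNM : NewtonMysovskii D N' C) {p v : E} {s : ℝ} (hs : s ∈ Icc (0 : ℝ) 1)
    (hp : p ∈ D) (hpv : p + s • v ∈ D) :
    ‖(N' p).symm (((N' (p + s • v) : E →L[ℝ] E) - N' p) v)‖ ≤ s * C * ‖v‖ ^ 2 := by
  rcases hs.1.eq_or_lt with rfl | hs0
  · simp
  have h := hNM (p + s • v) hpv p hp 1 (right_mem_Icc.2 zero_le_one)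
  have hback : p + s • v + (1 : ℝ) • (p - (p + s • v)) = p := by module
  have hdiff : p - (p + s • v) = -(s • v) := by module
  rw [hback, hdiff, map_neg, ← neg_apply, neg_sub, map_smul, map_smul,
    norm_smul, add_sub_cancel_left, norm_smul, Real.norm_of_nonneg hs.1] at h
  refine le_of_mul_le_mul_left ?_ hs0
  linarith

theorem NewtonMysovskii.norm_newtonStep_sub_le {D : Set E} {N : E → E} {N' : E → E ≃L[ℝ] E}
    {C : ℝ} (hNM : NewtonMysovskii D N' C) (hD : Convex ℝ D)
    (hderiv : ∀ p ∈ D, HasFDerivAt N (N' p : E →L[ℝ] E) p) {y z p : E} (hz : z ∈ D)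
    (hNz : N z = y) (hp : p ∈ D) :
    ‖newtonStep N N' y p - z‖ ≤ C / 2 * ‖p - z‖ ^ 2 := by
  set v := z - p
  set Φ := (N' p).symm
  have hseg (s : ℝ) (hs : s ∈ Icc (0 : ℝ) 1) : p + s • v ∈ D := by
    simpa [v, AffineMap.lineMap_apply_module', add_comm] using
      hD.lineMap_mem hp hz hs
  let g (s : ℝ) : E := Φ (N (p + s • v)) - s • v
  have hg (s : ℝ) (hs : s ∈ Icc (0 : ℝ) 1) :
      HasDerivAt g (Φ (((N' (p + s • v) : E →L[ℝ] E) - N' p) v)) s := by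
    have hline : HasDerivAt (fun s : ℝ => s • v) v s := by
      simpa using (hasDerivAt_id s).smul_const v
    have hN := (hderiv _ (hseg s hs)).comp_hasDerivAt s (hline.const_add p)
    convert (Φ.hasFDerivAt.comp_hasDerivAt s hN).sub hline using 1
    · rfl
    · simp [Φ]
  have hnewton : newtonStep N N' y p - z = g 1 - g 0 := by
    simp only [g, newtonStep, one_smul, zero_smul, add_zero, v, add_sub_cancel, hNz, Φ, map_sub]
    abel
  calc ‖newtonStep N N' y p - z‖ = ‖g 1 - g 0‖ := by rw [hnewton]
    _ ≤ C * ‖v‖ ^ 2 / 2 := norm_sub_le_of_norm_deriv_le_mul hg fun s hs =>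
        (hNM.norm_symm_sub_apply_le (Ico_subset_Icc_self hs) hp
          (hseg s (Ico_subset_Icc_self hs))).trans_eq (by ring)
    _ = C / 2 * ‖p - z‖ ^ 2 := by rw [norm_sub_rev]; ring

end Newton

theorem norm_sub_le_pow_mul_of_norm_sub_le_mul_sq {E : Type*} [SeminormedAddCommGroup E]
    {T : E → E} {x : ℕ → E} {z : E} {c ρ : ℝ}
    (hc : 0 ≤ c) (hcρ : c * ρ ≤ 1) (hT : ∀ p ∈ closedBall z ρ, ‖T p - z‖ ≤ c * ‖p - z‖ ^ 2)
    (hx0 : ‖x 0 - z‖ ≤ ρ) (hx : ∀ k, x (k + 1) = T (x k)) (k : ℕ) :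
    ‖x k - z‖ ≤ (c * ρ) ^ k * ρ := by
  have hρ : 0 ≤ ρ := (norm_nonneg _).trans hx0
  have hpow (k : ℕ) : (c * ρ) ^ k ≤ 1 := pow_le_one₀ (by positivity) hcρ
  induction k with
  | zero => simpa using hx0
  | succ k ih =>
    have hk : ‖x k - z‖ ≤ ρ := ih.trans (mul_le_of_le_one_left hρ (hpow k))
    calc ‖x (k + 1) - z‖ ≤ c * ‖x k - z‖ ^ 2 := hx k ▸ hT _ (mem_closedBall_iff_norm.2 hk)
      _ ≤ c * ((c * ρ) ^ k * ρ * ρ) := by rw [sq]; gcongr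
      _ = (c * ρ) ^ (k + 1) * ρ := by ring

theorem stmt1_general {n : ℕ}
    (D : Set (EuclideanSpace ℝ (Fin n)))
    (hDconv : Convex ℝ D)
    (N : EuclideanSpace ℝ (Fin n) → EuclideanSpace ℝ (Fin n))
    (N' : EuclideanSpace ℝ (Fin n) → (EuclideanSpace ℝ (Fin n) ≃L[ℝ] EuclideanSpace ℝ (Fin n)))
    (hderiv : ∀ p ∈ D, HasFDerivAt N (N' p : EuclideanSpace ℝ (Fin n) →L[ℝ] EuclideanSpace ℝ (Fin n)) p)
    (C_N : ℝ) (hCN : 0 < C_N)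
    (hNM : ∀ p ∈ D, ∀ q ∈ D, ∀ s ∈ Set.Icc (0:ℝ) 1,
      ‖(N' q).symm
        (((N' (p + s • (q - p)) : EuclideanSpace ℝ (Fin n) →L[ℝ] EuclideanSpace ℝ (Fin n))
          - (N' p : EuclideanSpace ℝ (Fin n) →L[ℝ] EuclideanSpace ℝ (Fin n))) (q - p))‖
        ≤ s * C_N * ‖p - q‖ ^ 2)
    (y : EuclideanSpace ℝ (Fin n))
    (pdag : EuclideanSpace ℝ (Fin n)) (hpdag : pdag ∈ D) (hsol : N pdag = y)
    (p0 : EuclideanSpace ℝ (Fin n))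
    (ρ : ℝ) (hρ : ρ = ‖pdag - p0‖)
    (hball : Metric.closedBall pdag ρ ⊆ D)
    (h : ℝ) (hh : h = ρ * C_N / 2) (hh1 : h < 1)
    (seq : ℕ → EuclideanSpace ℝ (Fin n))
    (hseq0 : seq 0 = p0)
    (hseqk : ∀ k, seq (k+1) = seq k - (N' (seq k)).symm (N (seq k) - y)) :
    (∀ k, seq k ∈ Metric.closedBall pdag ρ) ∧
    (∀ k, ‖seq (k+1) - pdag‖ ≤ C_N / 2 * ‖seq k - pdag‖ ^ 2) ∧
    (∀ k, ‖seq k - pdag‖ ≤ h ^ k * ρ) ∧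
    Filter.Tendsto seq Filter.atTop (nhds pdag) := by
  have hρ0 : 0 ≤ ρ := hρ ▸ norm_nonneg _
  have hh0 : 0 ≤ h := by rw [hh]; positivity
  have hcρ : C_N / 2 * ρ = h := by rw [hh]; ring
  have hstep (p) (hp : p ∈ closedBall pdag ρ) :
      ‖newtonStep N N' y p - pdag‖ ≤ C_N / 2 * ‖p - pdag‖ ^ 2 :=
    NewtonMysovskii.norm_newtonStep_sub_le hNM hDconv hderiv hpdag hsol (hball hp)
  have herr (k : ℕ) : ‖seq k - pdag‖ ≤ h ^ k * ρ := hcρ ▸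
    norm_sub_le_pow_mul_of_norm_sub_le_mul_sq (by positivity) (hcρ ▸ hh1.le) hstep
      (by rw [hseq0, hρ, norm_sub_rev]) hseqk k
  have hmem (k : ℕ) : seq k ∈ closedBall pdag ρ :=
    mem_closedBall_iff_norm.2 <| (herr k).trans <| mul_le_of_le_one_left hρ0 (pow_le_one₀ hh0 hh1.le)
  refine ⟨hmem, fun k => hseqk k ▸ hstep _ (hmem k), herr, ?_⟩
  exact tendsto_iff_norm_sub_tendsto_zero.2 <| squeeze_zero (fun _ => norm_nonneg _) herr <| by
    simpa using (tendsto_pow_atTop_nhds_zero_of_lt_one hh0 hh1).mul_const ρ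

/-- local quadratic convergence of Newton's method in ℝⁿ under the
Newton–Mysovskii condition with invertible derivatives. -/
theorem stmt1 {n : ℕ}
    (D : Set (EuclideanSpace ℝ (Fin n))) (hDne : D.Nonempty) (hDo : IsOpen D)
    (hDconv : Convex ℝ D)
    (N : EuclideanSpace ℝ (Fin n) → EuclideanSpace ℝ (Fin n))
    (N' : EuclideanSpace ℝ (Fin n) → (EuclideanSpace ℝ (Fin n) ≃L[ℝ] EuclideanSpace ℝ (Fin n)))
    (hderiv : ∀ p ∈ D, HasFDerivAt N (N' p : EuclideanSpace ℝ (Fin n) →L[ℝ] EuclideanSpace ℝ (Fin n)) p)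
    (hcont : ContinuousOn
      (fun p => (N' p : EuclideanSpace ℝ (Fin n) →L[ℝ] EuclideanSpace ℝ (Fin n))) D)
    (C_N : ℝ) (hCN : 0 < C_N)
    (hNM : ∀ p ∈ D, ∀ q ∈ D, ∀ s ∈ Set.Icc (0:ℝ) 1,
      ‖(N' q).symm
        (((N' (p + s • (q - p)) : EuclideanSpace ℝ (Fin n) →L[ℝ] EuclideanSpace ℝ (Fin n))
          - (N' p : EuclideanSpace ℝ (Fin n) →L[ℝ] EuclideanSpace ℝ (Fin n))) (q - p))‖
        ≤ s * C_N * ‖p - q‖ ^ 2)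
    (y : EuclideanSpace ℝ (Fin n))
    (pdag : EuclideanSpace ℝ (Fin n)) (hpdag : pdag ∈ D) (hsol : N pdag = y)
    (p0 : EuclideanSpace ℝ (Fin n)) (hp0 : p0 ∈ D)
    (ρ : ℝ) (hρ : ρ = ‖pdag - p0‖)
    (hball : Metric.closedBall pdag ρ ⊆ D)
    (h : ℝ) (hh : h = ρ * C_N / 2) (hh1 : h < 1)
    (seq : ℕ → EuclideanSpace ℝ (Fin n))
    (hseq0 : seq 0 = p0)
    (hseqk : ∀ k, seq (k+1) = seq k - (N' (seq k)).symm (N (seq k) - y)) :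
    (∀ k, seq k ∈ Metric.closedBall pdag ρ) ∧
    (∀ k, ‖seq (k+1) - pdag‖ ≤ C_N / 2 * ‖seq k - pdag‖ ^ 2) ∧
    (∀ k, ‖seq k - pdag‖ ≤ h ^ k * ρ) ∧
    Filter.Tendsto seq Filter.atTop (nhds pdag) :=
  stmt1_general D hDconv N N' hderiv C_N hCN hNM y pdag hpdag hsol p0 ρ hρ hball h hh hh1 seq hseq0
    hseqk
end

section
/- Let X be a real Hilbert space, K ⊆ ℝᵐ a nonempty compact convex set, and A : K → (ℝᵐ →L X) a map with values in the continuous linear maps from ℝᵐ to X such that A(p) is injective for every p ∈ K and A is Lipschitz continuous on K, i.e. ‖A(p) − A(q)‖ ≤ C‖p − q‖ for some C > 0 and all p, q ∈ K. For p ∈ K let B(p) : X → ℝᵐ denote the (unique) continuous linear map satisfying B(p) ∘ A(p) = id, A(p) ∘ B(p) = orthogonal projection onto range A(p), and B(p) ∘ A(p) ∘ B(p) = B(p). Then there exist constants C_I, C_L' > 0 such that ‖B(p)‖ ≤ C_I and ‖B(p) − B(q)‖ ≤ C_L' ‖p − q‖ for all p, q ∈ K. -/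
/-!
Compactness of `K` and of the unit sphere of `ℝᵐ`, together with injectivity, give a uniform
lower bound `σ ‖v‖ ≤ ‖A p v‖`; as `A p ∘ B p` is an orthogonal projection, `‖B p‖ ≤ σ⁻¹`.
For the Lipschitz bound write
`B p - B q = B p (1 - A q B q) + B p (A q - A p) B q`. The second term is `O(‖A p - A q‖)`, and so
is the first: `u = x - A q B q x` is orthogonal to the range of `A q`, so
`‖A p B p u‖² = ⟪A p B p u, u⟫ = ⟪(A p - A q) B p u, u⟫`.
-/

open scoped InnerProductSpace
open Metric

section LowerBound

variable {E F : Type*} [NormedAddCommGroup E] [NormedSpace ℝ E]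
  [NormedAddCommGroup F] [NormedSpace ℝ F]

theorem ContinuousLinearMap.mul_norm_le_norm_apply_of_forall_sphere {f : E →L[ℝ] F} {σ : ℝ}
    (h : ∀ u ∈ sphere (0 : E) 1, σ ≤ ‖f u‖) (x : E) : σ * ‖x‖ ≤ ‖f x‖ := by
  rcases eq_or_ne x 0 with rfl | hx
  · simp
  have hx' : ‖x‖ ≠ 0 := norm_ne_zero_iff.mpr hx
  have hu : ‖x‖⁻¹ • x ∈ sphere (0 : E) 1 := by
    simp [norm_smul, inv_mul_cancel₀ hx']
  have := h _ hu
  rw [map_smul, norm_smul, norm_inv, norm_norm, inv_mul_eq_div, le_div_iff₀' (by positivity)] at this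
  linarith [mul_comm σ ‖x‖]

theorem IsCompact.exists_pos_forall_mul_norm_le_of_injective [FiniteDimensional ℝ E]
    {P : Type*} [TopologicalSpace P] {K : Set P} (hK : IsCompact K) {A : P → E →L[ℝ] F}
    (hA : ContinuousOn A K) (hinj : ∀ p ∈ K, Function.Injective (A p)) :
    ∃ σ > 0, ∀ p ∈ K, ∀ x, σ * ‖x‖ ≤ ‖A p x‖ := by
  by_cases hne : (K ×ˢ sphere (0 : E) 1).Nonempty
  · have hcont : ContinuousOn (fun z : P × E => ‖A z.1 z.2‖) (K ×ˢ sphere (0 : E) 1) :=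
      ((hA.comp continuousOn_fst fun _ hz => hz.1).clm_apply continuousOn_snd).norm
    obtain ⟨z, hz, hmin⟩ := (hK.prod (isCompact_sphere 0 1)).exists_isMinOn hne hcont
    refine ⟨‖A z.1 z.2‖, ?_, fun p hp => (A p).mul_norm_le_norm_apply_of_forall_sphere
      fun u hu => isMinOn_iff.mp hmin (p, u) ⟨hp, hu⟩⟩
    have hz₂ : z.2 ≠ 0 := ne_zero_of_mem_unit_sphere ⟨z.2, hz.2⟩
    exact norm_pos_iff.mpr fun h => hz₂ (hinj _ hz.1 (h.trans (map_zero _).symm))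
  · exact ⟨1, one_pos, fun p hp => (A p).mul_norm_le_norm_apply_of_forall_sphere
      fun u hu => absurd ⟨(p, u), hp, hu⟩ hne⟩

end LowerBound

section LeastSquares

variable {E X : Type*} [NormedAddCommGroup E] [NormedSpace ℝ E]
  [NormedAddCommGroup X] [InnerProductSpace ℝ X]

/-- `a' x` solves the normal equations of `a v = x`, i.e. `a ∘ a'` is the orthogonal projection
onto the range of `a`. -/
def IsLeastSquaresInverse (a : E →L[ℝ] X) (a' : X →L[ℝ] E) : Prop :=
  ∀ x v, ⟪a v, x - a (a' x)⟫_ℝ = 0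

theorem isLeastSquaresInverse_of_apply_eq_orthogonalProjection {a : E →L[ℝ] X} {a' : X →L[ℝ] E}
    [(LinearMap.range (a : E →ₗ[ℝ] X)).HasOrthogonalProjection]
    (h : ∀ x, a (a' x) = (Submodule.orthogonalProjectionOnto (LinearMap.range (a : E →ₗ[ℝ] X)) x : X)) :
    IsLeastSquaresInverse a a' := fun x v => by
  rw [h x]
  exact Submodule.inner_right_of_mem_orthogonal (LinearMap.mem_range_self _ v)
    (Submodule.sub_starProjection_mem_orthogonal x)

namespace IsLeastSquaresInverse

variable {a b : E →L[ℝ] X} {a' b' : X →L[ℝ] E}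

theorem norm_apply_apply_sq_add_norm_sub_sq (ha : IsLeastSquaresInverse a a') (x : X) :
    ‖a (a' x)‖ ^ 2 + ‖x - a (a' x)‖ ^ 2 = ‖x‖ ^ 2 := by
  have := norm_add_sq_eq_norm_sq_add_norm_sq_real (ha x (a' x))
  rw [add_sub_cancel] at this
  nlinarith

theorem norm_apply_apply_le (ha : IsLeastSquaresInverse a a') (x : X) : ‖a (a' x)‖ ≤ ‖x‖ :=
  (pow_le_pow_iff_left₀ (norm_nonneg _) (norm_nonneg _) two_ne_zero).mp
    (by linarith [ha.norm_apply_apply_sq_add_norm_sub_sq x, sq_nonneg ‖x - a (a' x)‖])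

theorem norm_sub_apply_apply_le (ha : IsLeastSquaresInverse a a') (x : X) :
    ‖x - a (a' x)‖ ≤ ‖x‖ :=
  (pow_le_pow_iff_left₀ (norm_nonneg _) (norm_nonneg _) two_ne_zero).mp
    (by linarith [ha.norm_apply_apply_sq_add_norm_sub_sq x, sq_nonneg ‖a (a' x)‖])

variable {σ : ℝ}

theorem opNorm_le (ha : IsLeastSquaresInverse a a') (hσ : 0 < σ)
    (hlow : ∀ v, σ * ‖v‖ ≤ ‖a v‖) : ‖a'‖ ≤ σ⁻¹ :=
  a'.opNorm_le_bound (by positivity) fun x => by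
    rw [inv_mul_eq_div, le_div_iff₀' hσ]
    exact (hlow (a' x)).trans (ha.norm_apply_apply_le x)

theorem norm_apply_le_of_forall_inner_eq_zero (ha : IsLeastSquaresInverse a a') (hσ : 0 < σ)
    (hlow : ∀ v, σ * ‖v‖ ≤ ‖a v‖) {u : X} (hu : ∀ v, ⟪b v, u⟫_ℝ = 0) :
    ‖a' u‖ ≤ σ⁻¹ ^ 2 * ‖a - b‖ * ‖u‖ := by
  have hsq : ‖a (a' u)‖ ^ 2 = ⟪(a - b) (a' u), u⟫_ℝ := by
    have := ha u (a' u)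
    rw [inner_sub_right, real_inner_self_eq_norm_sq] at this
    rw [sub_apply, inner_sub_left, hu, sub_zero]
    linarith
  have hcs : ⟪(a - b) (a' u), u⟫_ℝ ≤ ‖a - b‖ * ‖a' u‖ * ‖u‖ :=
    (real_inner_le_norm _ _).trans
      (mul_le_mul_of_nonneg_right ((a - b).le_opNorm _) (norm_nonneg _))
  have hlow' := hlow (a' u)
  rw [inv_pow, inv_mul_eq_div, div_mul_eq_mul_div, le_div_iff₀' (by positivity)]
  rcases (norm_nonneg (a' u)).eq_or_lt with h0 | hpos
  · rw [← h0, mul_zero]; positivity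
  · refine le_of_mul_le_mul_right ?_ hpos
    nlinarith [mul_le_mul hlow' hlow' (by positivity) (norm_nonneg _)]

theorem norm_sub_le (ha : IsLeastSquaresInverse a a') (hb : IsLeastSquaresInverse b b')
    (ha' : a'.comp a = .id ℝ E) (hσ : 0 < σ) (hlowa : ∀ v, σ * ‖v‖ ≤ ‖a v‖)
    (hlowb : ∀ v, σ * ‖v‖ ≤ ‖b v‖) : ‖a' - b'‖ ≤ 2 * σ⁻¹ ^ 2 * ‖a - b‖ := by
  refine (a' - b').opNorm_le_bound (by positivity) fun x => ?_
  have hdecomp : (a' - b') x = a' (x - b (b' x)) + a' ((b - a) (b' x)) := by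
    have : a' (a (b' x)) = b' x := DFunLike.congr_fun ha' (b' x)
    simp only [sub_apply, map_sub, this]
    abel
  have hres : ‖a' (x - b (b' x))‖ ≤ σ⁻¹ ^ 2 * ‖a - b‖ * ‖x‖ :=
    (ha.norm_apply_le_of_forall_inner_eq_zero hσ hlowa (hb x)).trans
      (mul_le_mul_of_nonneg_left (hb.norm_sub_apply_apply_le x) (by positivity))
  have hpert : ‖a' ((b - a) (b' x))‖ ≤ σ⁻¹ * (‖a - b‖ * (σ⁻¹ * ‖x‖)) :=
    calc ‖a' ((b - a) (b' x))‖ ≤ σ⁻¹ * ‖(b - a) (b' x)‖ :=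
          a'.le_of_opNorm_le (ha.opNorm_le hσ hlowa) _
      _ ≤ σ⁻¹ * (‖b - a‖ * ‖b' x‖) := by gcongr; exact (b - a).le_opNorm _
      _ ≤ σ⁻¹ * (‖a - b‖ * (σ⁻¹ * ‖x‖)) := by
          rw [norm_sub_rev]; gcongr; exact b'.le_of_opNorm_le (hb.opNorm_le hσ hlowb) x
  calc ‖(a' - b') x‖ ≤ ‖a' (x - b (b' x))‖ + ‖a' ((b - a) (b' x))‖ :=
        hdecomp ▸ norm_add_le _ _
    _ ≤ 2 * σ⁻¹ ^ 2 * ‖a - b‖ * ‖x‖ := by linarith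

end IsLeastSquaresInverse

end LeastSquares

theorem stmt3_general {X : Type*} [NormedAddCommGroup X] [InnerProductSpace ℝ X]
    {m : ℕ} (K : Set (EuclideanSpace ℝ (Fin m)))
    (hKcompact : IsCompact K)
    (A : EuclideanSpace ℝ (Fin m) → (EuclideanSpace ℝ (Fin m) →L[ℝ] X))
    (hAinj : ∀ p ∈ K, Function.Injective (A p))
    (C : ℝ) (hC : 0 < C)
    (hALip : ∀ p ∈ K, ∀ q ∈ K, ‖A p - A q‖ ≤ C * ‖p - q‖)
    (B : EuclideanSpace ℝ (Fin m) → (X →L[ℝ] EuclideanSpace ℝ (Fin m)))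
    (hBA : ∀ p ∈ K, (B p).comp (A p) = ContinuousLinearMap.id ℝ (EuclideanSpace ℝ (Fin m)))
    (hAB : ∀ p ∈ K, ∀ x : X, A p (B p x) =
      (Submodule.orthogonalProjection (LinearMap.range ((A p) : EuclideanSpace ℝ (Fin m) →ₗ[ℝ] X)) x : X)) :
    ∃ C_I C_L' : ℝ, 0 < C_I ∧ 0 < C_L' ∧
      (∀ p ∈ K, ‖B p‖ ≤ C_I) ∧
      (∀ p ∈ K, ∀ q ∈ K, ‖B p - B q‖ ≤ C_L' * ‖p - q‖) := by
  have hAcont : ContinuousOn A K :=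
    (LipschitzOnWith.of_dist_le' (by simpa only [dist_eq_norm] using hALip)).continuousOn
  obtain ⟨σ, hσ, hlow⟩ := hKcompact.exists_pos_forall_mul_norm_le_of_injective hAcont hAinj
  have hLS : ∀ p ∈ K, IsLeastSquaresInverse (A p) (B p) := fun p hp =>
    isLeastSquaresInverse_of_apply_eq_orthogonalProjection (hAB p hp)
  refine ⟨σ⁻¹, 2 * σ⁻¹ ^ 2 * C, by positivity, by positivity,
    fun p hp => (hLS p hp).opNorm_le hσ (hlow p hp), fun p hp q hq => ?_⟩
  calc ‖B p - B q‖ ≤ 2 * σ⁻¹ ^ 2 * ‖A p - A q‖ :=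
        (hLS p hp).norm_sub_le (hLS q hq) (hBA p hp) hσ (hlow p hp) (hlow q hq)
    _ ≤ 2 * σ⁻¹ ^ 2 * (C * ‖p - q‖) := by gcongr; exact hALip p hp q hq
    _ = 2 * σ⁻¹ ^ 2 * C * ‖p - q‖ := by ring

/-- uniform boundedness and Lipschitz continuity of Moore–Penrose
inverses `B(p)` of a Lipschitz family of injective linear maps `A(p)` on a compact
convex set `K`. -/
theorem stmt3 {X : Type*} [NormedAddCommGroup X] [InnerProductSpace ℝ X] [CompleteSpace X]
    {m : ℕ} (K : Set (EuclideanSpace ℝ (Fin m)))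
    (hKne : K.Nonempty) (hKcompact : IsCompact K) (hKconv : Convex ℝ K)
    (A : EuclideanSpace ℝ (Fin m) → (EuclideanSpace ℝ (Fin m) →L[ℝ] X))
    (hAinj : ∀ p ∈ K, Function.Injective (A p))
    (C : ℝ) (hC : 0 < C)
    (hALip : ∀ p ∈ K, ∀ q ∈ K, ‖A p - A q‖ ≤ C * ‖p - q‖)
    (B : EuclideanSpace ℝ (Fin m) → (X →L[ℝ] EuclideanSpace ℝ (Fin m)))
    (hBA : ∀ p ∈ K, (B p).comp (A p) = ContinuousLinearMap.id ℝ (EuclideanSpace ℝ (Fin m)))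
    (hAB : ∀ p ∈ K, ∀ x : X, A p (B p x) =
      (Submodule.orthogonalProjection (LinearMap.range ((A p) : EuclideanSpace ℝ (Fin m) →ₗ[ℝ] X)) x : X))
    (hBAB : ∀ p ∈ K, ∀ x : X, B p (A p (B p x)) = B p x) :
    ∃ C_I C_L' : ℝ, 0 < C_I ∧ 0 < C_L' ∧
      (∀ p ∈ K, ‖B p‖ ≤ C_I) ∧
      (∀ p ∈ K, ∀ q ∈ K, ‖B p - B q‖ ≤ C_L' * ‖p - q‖) :=
  stmt3_general K hKcompact A hAinj C hC hALip B hBA hAB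
end

section
/- Let X be a real Banach space, D ⊆ ℝᵐ a nonempty open convex set, and Ψ : D → X Fréchet differentiable with ‖Ψ'(p) − Ψ'(q)‖ ≤ C_L ‖p − q‖ for all p, q ∈ D. Let p, p† ∈ D and let B : X → ℝᵐ be a continuous linear map with B ∘ Ψ'(p) = id on ℝᵐ and ‖B‖ ≤ C_I. Then the Gauss–Newton step p⁺ := p − B(Ψ(p) − Ψ(p†)) satisfies ‖p⁺ − p†‖ ≤ (C_I C_L / 2) ‖p − p†‖². -/
/-!
Restricting `Ψ` to the segment from `p` to `p†` and comparing with the parabola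
`t ↦ C_L t² ‖p† - p‖² / 2` (whose derivative dominates that of the linearisation error) bounds
the Taylor remainder `Ψ(p†) - Ψ(p) - Ψ'(p)(p† - p)` by `C_L/2 ‖p - p†‖²`. Since `B Ψ'(p) = id`,
the Gauss–Newton error `p⁺ - p†` is exactly `B` applied to this remainder.
-/

open Set

theorem Convex.norm_image_sub_sub_apply_le_of_lipschitz_fderiv
    {E F : Type*} [NormedAddCommGroup E] [NormedSpace ℝ E]
    [NormedAddCommGroup F] [NormedSpace ℝ F]
    {s : Set E} (hs : Convex ℝ s) {f : E → F} {f' : E → E →L[ℝ] F}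
    (hf : ∀ z ∈ s, HasFDerivAt f (f' z) z) {C : ℝ} {x y : E} (hx : x ∈ s) (hy : y ∈ s)
    (hlip : ∀ z ∈ s, ‖f' z - f' x‖ ≤ C * ‖z - x‖) :
    ‖f y - f x - f' x (y - x)‖ ≤ C / 2 * ‖y - x‖ ^ 2 := by
  set v := y - x
  have hseg : ∀ t ∈ Icc (0 : ℝ) 1, x + t • v ∈ s := fun t ht => hs.add_smul_sub_mem hx hy ht
  set g : ℝ → F := fun t => f (x + t • v) - f x - t • f' x v
  have hg : ∀ t ∈ Icc (0 : ℝ) 1, HasDerivAt g (f' (x + t • v) v - f' x v) t := by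
    intro t ht
    have hline : HasDerivAt (fun r : ℝ => x + r • v) v t := by
      simpa using ((hasDerivAt_id t).smul_const v).const_add x
    exact (((hf _ (hseg t ht)).comp_hasDerivAt t hline).sub_const (f x)).sub
      (by simpa using (hasDerivAt_id t).smul_const (f' x v))
  have hg' : ∀ t ∈ Ico (0 : ℝ) 1, ‖f' (x + t • v) v - f' x v‖ ≤ C * ‖v‖ ^ 2 * t := by
    intro t ht
    calc ‖f' (x + t • v) v - f' x v‖ = ‖(f' (x + t • v) - f' x) v‖ := by
          rw [sub_apply]
      _ ≤ ‖f' (x + t • v) - f' x‖ * ‖v‖ := ContinuousLinearMap.le_opNorm _ _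
      _ ≤ C * ‖x + t • v - x‖ * ‖v‖ := by
          gcongr; exact hlip _ (hseg t (Ico_subset_Icc_self ht))
      _ = C * ‖v‖ ^ 2 * t := by
          rw [add_sub_cancel_left, norm_smul, Real.norm_of_nonneg ht.1]; ring
  have hparabola : ∀ t, HasDerivAt (fun r : ℝ => C / 2 * ‖v‖ ^ 2 * r ^ 2) (C * ‖v‖ ^ 2 * t) t :=
    fun t => ((hasDerivAt_pow 2 t).const_mul (C / 2 * ‖v‖ ^ 2)).congr_deriv (by ring)
  have hremainder := image_norm_le_of_norm_deriv_right_le_deriv_boundary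
    (fun t ht => (hg t ht).continuousAt.continuousWithinAt)
    (fun t ht => (hg t (Ico_subset_Icc_self ht)).hasDerivWithinAt)
    (by simp [g]) hparabola hg' (right_mem_Icc.2 zero_le_one)
  simpa [g, v] using hremainder

theorem ContinuousLinearMap.norm_sub_apply_sub_sub_le_of_comp_eq_id
    {𝕜 E F : Type*} [NontriviallyNormedField 𝕜]
    [NormedAddCommGroup E] [NormedSpace 𝕜 E] [NormedAddCommGroup F] [NormedSpace 𝕜 F]
    {B : F →L[𝕜] E} {L : E →L[𝕜] F} (hBL : B.comp L = ContinuousLinearMap.id 𝕜 E)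
    (p q : E) (u w : F) :
    ‖(p - B (u - w)) - q‖ ≤ ‖B‖ * ‖w - u - L (q - p)‖ := by
  have hBL_apply : B (L (q - p)) = q - p := by
    rw [← ContinuousLinearMap.comp_apply, hBL, ContinuousLinearMap.id_apply]
  have hstep : (p - B (u - w)) - q = B (w - u - L (q - p)) := by
    rw [map_sub, map_sub, hBL_apply, map_sub]; abel
  exact hstep ▸ B.le_opNorm _

theorem stmt6_general {X : Type*} [NormedAddCommGroup X] [NormedSpace ℝ X]
    {m : ℕ} (D : Set (EuclideanSpace ℝ (Fin m)))
    (hDconv : Convex ℝ D)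
    (Ψ : EuclideanSpace ℝ (Fin m) → X)
    (Ψ' : EuclideanSpace ℝ (Fin m) → (EuclideanSpace ℝ (Fin m) →L[ℝ] X))
    (hderiv : ∀ p ∈ D, HasFDerivAt Ψ (Ψ' p) p)
    (C_L C_I : ℝ)
    (hLip : ∀ p ∈ D, ∀ q ∈ D, ‖Ψ' p - Ψ' q‖ ≤ C_L * ‖p - q‖)
    (p pdag : EuclideanSpace ℝ (Fin m)) (hp : p ∈ D) (hpdag : pdag ∈ D)
    (B : X →L[ℝ] EuclideanSpace ℝ (Fin m))
    (hBleft : B.comp (Ψ' p) = ContinuousLinearMap.id ℝ (EuclideanSpace ℝ (Fin m)))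
    (hB : ‖B‖ ≤ C_I) :
    ‖(p - B (Ψ p - Ψ pdag)) - pdag‖ ≤ C_I * C_L / 2 * ‖p - pdag‖ ^ 2 := by
  have hremainder := hDconv.norm_image_sub_sub_apply_le_of_lipschitz_fderiv hderiv hp hpdag
    (fun z hz => hLip z hz p hp)
  calc ‖(p - B (Ψ p - Ψ pdag)) - pdag‖
      ≤ ‖B‖ * ‖Ψ pdag - Ψ p - Ψ' p (pdag - p)‖ :=
        ContinuousLinearMap.norm_sub_apply_sub_sub_le_of_comp_eq_id hBleft _ _ _ _
    _ ≤ C_I * (C_L / 2 * ‖pdag - p‖ ^ 2) :=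
        mul_le_mul hB hremainder (norm_nonneg _) ((norm_nonneg B).trans hB)
    _ = C_I * C_L / 2 * ‖p - pdag‖ ^ 2 := by rw [norm_sub_rev]; ring

/-- the one-step Gauss–Newton contraction estimate: if `B` is a bounded
left inverse of `Ψ'(p)` with `‖B‖ ≤ C_I` and `Ψ'` is `C_L`-Lipschitz on a convex
open set `D`, then the Gauss–Newton step satisfies a quadratic error bound. -/
theorem stmt6 {X : Type*} [NormedAddCommGroup X] [NormedSpace ℝ X] [CompleteSpace X]
    {m : ℕ} (D : Set (EuclideanSpace ℝ (Fin m)))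
    (hDne : D.Nonempty) (hDo : IsOpen D) (hDconv : Convex ℝ D)
    (Ψ : EuclideanSpace ℝ (Fin m) → X)
    (Ψ' : EuclideanSpace ℝ (Fin m) → (EuclideanSpace ℝ (Fin m) →L[ℝ] X))
    (hderiv : ∀ p ∈ D, HasFDerivAt Ψ (Ψ' p) p)
    (C_L C_I : ℝ)
    (hLip : ∀ p ∈ D, ∀ q ∈ D, ‖Ψ' p - Ψ' q‖ ≤ C_L * ‖p - q‖)
    (p pdag : EuclideanSpace ℝ (Fin m)) (hp : p ∈ D) (hpdag : pdag ∈ D)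
    (B : X →L[ℝ] EuclideanSpace ℝ (Fin m))
    (hBleft : B.comp (Ψ' p) = ContinuousLinearMap.id ℝ (EuclideanSpace ℝ (Fin m)))
    (hB : ‖B‖ ≤ C_I) :
    ‖(p - B (Ψ p - Ψ pdag)) - pdag‖ ≤ C_I * C_L / 2 * ‖p - pdag‖ ^ 2 :=
  stmt6_general D hDconv Ψ Ψ' hderiv C_L C_I hLip p pdag hp hpdag B hBleft hB
end

section
/- Let σ : ℝ → ℝ be twice continuously differentiable with σ, σ' and σ'' bounded, and let Ψ : ℝ^{n*} → L²([0,1]ⁿ) with n* = N(n+2) be the shallow neural network operator with derivative DΨ[p]. Then for every bounded convex set U ⊆ ℝ^{n*} there exist constants C_I, C_L > 0 such that for all p, q ∈ U: ‖DΨ[p]‖ ≤ C_I and ‖DΨ[p] − DΨ[q]‖ ≤ C_L ‖p − q‖, where ‖·‖ denotes the operator norm of continuous linear maps from ℝ^{n*} to L²([0,1]ⁿ). -/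
/-!
Fix `R` with `‖p‖ ≤ R` on `U`. Pointwise on the unit cube, the network's first difference obeys
`|Ψ(p + k) - Ψ p| ≤ C_I ‖k‖` and its second difference
`|(Ψ(p + k) - Ψ p) - (Ψ(q + k) - Ψ q)| ≤ C_L ‖p - q‖ ‖k‖`. Both are proved neuron by neuron from
the bounds on `σ`, `σ'`, `σ''`; the second uses the mixed difference
`|σ(u + d) - σ u - (σ(v + d) - σ v)| ≤ ‖σ''‖∞ |u - v| |d|`. The cube has measure one, so the
bounds pass to `L²`. A derivative's operator norm is at most any Lipschitz constant of the map at
the base point; apply this to `Ψ` at `p` and to `y ↦ Ψ y - Ψ (y + q - p)` at `p`.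
-/

open MeasureTheory

theorem MeasureTheory.Lp.norm_le_of_ae_eq_of_norm_le {α E : Type*} [MeasurableSpace α]
    {μ : Measure α} [IsProbabilityMeasure μ] [NormedAddCommGroup E] {p : ENNReal}
    {f : Lp E p μ} {F : α → E} {C : ℝ} (hf : f =ᵐ[μ] F) (hC : 0 ≤ C)
    (h : ∀ᵐ x ∂μ, ‖F x‖ ≤ C) : ‖f‖ ≤ C := by
  have := Lp.norm_le_of_ae_bound hC (by filter_upwards [hf, h] with x hfx hx; rwa [hfx])
  simpa [measureUnivNNReal] using this

instance isProbabilityMeasure_restrict_unitCube (n : ℕ) :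
    IsProbabilityMeasure (volume.restrict (Set.Icc (0 : Fin n → ℝ) 1)) :=
  ⟨by simp [Real.volume_Icc_pi]⟩

theorem abs_sum_le_card_mul {N : ℕ} {f : Fin N → ℝ} {B : ℝ} (h : ∀ j, |f j| ≤ B) :
    |∑ j, f j| ≤ N * B :=
  (Finset.abs_sum_le_sum_abs _ _).trans
    ((Finset.sum_le_card_nsmul _ _ _ fun j _ => h j).trans_eq (by simp))

section FDeriv

variable {E F : Type*} [NormedAddCommGroup E] [NormedSpace ℝ E] [NormedAddCommGroup F]
  [NormedSpace ℝ F] {f : E → F} {C : ℝ}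

theorem HasFDerivAt.norm_le_of_forall_norm_add_sub_le {f' : E →L[ℝ] F} {x : E}
    (hf : HasFDerivAt f f' x) (hC : 0 ≤ C) (h : ∀ k, ‖f (x + k) - f x‖ ≤ C * ‖k‖) :
    ‖f'‖ ≤ C :=
  hf.le_of_lip' hC (.of_forall fun y => by simpa using h (y - x))

theorem HasFDerivAt.norm_sub_le_of_forall_norm_sub_sub_le {f'p f'q : E →L[ℝ] F} {p q : E}
    (hp : HasFDerivAt f f'p p) (hq : HasFDerivAt f f'q q) (hC : 0 ≤ C)
    (h : ∀ k, ‖(f (p + k) - f p) - (f (q + k) - f q)‖ ≤ C * ‖k‖) : ‖f'p - f'q‖ ≤ C := by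
  have hq' : HasFDerivAt (fun y => f (y + (q - p))) f'q p := by
    rw [← add_sub_cancel p q] at hq
    exact hq.comp p ((hasFDerivAt_id p).add_const (q - p))
  refine (hp.sub hq').norm_le_of_forall_norm_add_sub_le hC fun k => ?_
  convert h k using 2
  simp only [Pi.sub_apply]
  rw [show p + k + (q - p) = q + k by abel, add_sub_cancel]
  abel

end FDeriv

section Activation

variable {σ : ℝ → ℝ} {M : ℝ}

theorem abs_sub_le_of_abs_deriv_le (hσ : Differentiable ℝ σ) (h : ∀ t, |deriv σ t| ≤ M)
    (s t : ℝ) : |σ s - σ t| ≤ M * |s - t| := by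
  simpa only [Real.norm_eq_abs] using
    convex_univ.norm_image_sub_le_of_norm_deriv_le (fun x _ => hσ x) (fun x _ => h x)
      (Set.mem_univ t) (Set.mem_univ s)

theorem abs_second_difference_le (hσ : ContDiff ℝ 2 σ)
    (h : ∀ t, |deriv (deriv σ) t| ≤ M) (u v d : ℝ) :
    |σ (u + d) - σ u - (σ (v + d) - σ v)| ≤ M * |u - v| * |d| := by
  have hσ₁ : Differentiable ℝ σ := hσ.differentiable two_ne_zero
  have hσ₂ : Differentiable ℝ (deriv σ) := (hσ.iterate_deriv' 1 1).differentiable one_ne_zero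
  have hg : Differentiable ℝ fun s => σ (u + s) - σ (v + s) := by fun_prop
  have hg' : ∀ s, |deriv (fun s => σ (u + s) - σ (v + s)) s| ≤ M * |u - v| := fun s => by
    rw [deriv_fun_sub (by fun_prop) (by fun_prop),
      deriv_comp_const_add, deriv_comp_const_add]
    simpa using abs_sub_le_of_abs_deriv_le hσ₂ h (u + s) (v + s)
  simpa [sub_sub_sub_comm] using abs_sub_le_of_abs_deriv_le hg hg' d 0

theorem abs_neuron_add_sub_le (h₀ : ∀ t, |σ t| ≤ M) (h₁ : ∀ s t, |σ s - σ t| ≤ M * |s - t|)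
    (a b u d : ℝ) : |(a + b) * σ (u + d) - a * σ u| ≤ M * (|b| + |a| * |d|) :=
  calc |(a + b) * σ (u + d) - a * σ u| = |b * σ (u + d) + a * (σ (u + d) - σ u)| := by
        ring_nf
    _ ≤ |b| * M + |a| * (M * |d|) := by
        refine (abs_add_le _ _).trans ?_
        rw [abs_mul, abs_mul]
        gcongr
        · exact h₀ _
        · simpa using h₁ (u + d) u
    _ = M * (|b| + |a| * |d|) := by ring

theorem abs_neuron_second_difference_le (h₁ : ∀ s t, |σ s - σ t| ≤ M * |s - t|)
    (h₂ : ∀ u v d, |σ (u + d) - σ u - (σ (v + d) - σ v)| ≤ M * |u - v| * |d|)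
    (a b c u v d : ℝ) :
    |((a + b) * σ (u + d) - a * σ u) - ((c + b) * σ (v + d) - c * σ v)|
      ≤ M * (|b| * |u - v| + |a - c| * |d| + |c| * (|u - v| * |d|)) :=
  calc |((a + b) * σ (u + d) - a * σ u) - ((c + b) * σ (v + d) - c * σ v)|
      = |b * (σ (u + d) - σ (v + d)) + (a - c) * (σ (u + d) - σ u)
          + c * (σ (u + d) - σ u - (σ (v + d) - σ v))| := by ring_nf
    _ ≤ |b| * (M * |u - v|) + |a - c| * (M * |d|) + |c| * (M * |u - v| * |d|) := by
        refine (abs_add_le _ _).trans (add_le_add ((abs_add_le _ _).trans ?_) ?_)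
        · rw [abs_mul, abs_mul]
          gcongr
          · simpa using h₁ (u + d) (v + d)
          · simpa using h₁ (u + d) u
        · rw [abs_mul]
          exact mul_le_mul_of_nonneg_left (h₂ u v d) (abs_nonneg c)
    _ = M * (|b| * |u - v| + |a - c| * |d| + |c| * (|u - v| * |d|)) := by ring

end Activation

namespace ShallowNetwork

variable {n N : ℕ}

abbrev Param (n N : ℕ) := (Fin N → ℝ) × (Fin N → Fin n → ℝ) × (Fin N → ℝ)

def preactivation (p : Param n N) (j : Fin N) (x : Fin n → ℝ) : ℝ :=
  ∑ i, p.2.1 j i * x i + p.2.2 j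

def eval (σ : ℝ → ℝ) (p : Param n N) (x : Fin n → ℝ) : ℝ :=
  ∑ j, p.1 j * σ (preactivation p j x)

theorem preactivation_add (p k : Param n N) (j : Fin N) (x : Fin n → ℝ) :
    preactivation (p + k) j x = preactivation p j x + preactivation k j x := by
  simp only [preactivation, Prod.snd_add, Prod.fst_add, Pi.add_apply, add_mul,
    Finset.sum_add_distrib]
  ring

theorem preactivation_sub (p q : Param n N) (j : Fin N) (x : Fin n → ℝ) :
    preactivation (p - q) j x = preactivation p j x - preactivation q j x := by
  simp only [preactivation, Prod.snd_sub, Prod.fst_sub, Pi.sub_apply, sub_mul,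
    Finset.sum_sub_distrib]
  ring

theorem abs_fst_apply_le_norm (p : Param n N) (j : Fin N) : |p.1 j| ≤ ‖p‖ :=
  (norm_le_pi_norm p.1 j).trans (norm_fst_le p)

theorem abs_preactivation_le (p : Param n N) (j : Fin N) {x : Fin n → ℝ}
    (hx : x ∈ Set.Icc 0 1) : |preactivation p j x| ≤ (n + 1) * ‖p‖ := by
  have hw : ∀ i, |p.2.1 j i| ≤ ‖p‖ := fun i =>
    ((norm_le_pi_norm (p.2.1 j) i).trans (norm_le_pi_norm p.2.1 j)).trans
      ((norm_fst_le p.2).trans (norm_snd_le p))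
  have hθ : |p.2.2 j| ≤ ‖p‖ := (norm_le_pi_norm p.2.2 j).trans
    ((norm_snd_le p.2).trans (norm_snd_le p))
  have hxi : ∀ i, |x i| ≤ 1 := fun i =>
    abs_le.mpr ⟨by linarith [show (0 : ℝ) ≤ x i from hx.1 i], hx.2 i⟩
  calc |preactivation p j x| ≤ ∑ i, |p.2.1 j i| * |x i| + |p.2.2 j| := by
        refine (abs_add_le _ _).trans (add_le_add_left ?_ _)
        exact (Finset.abs_sum_le_sum_abs _ _).trans_eq (by simp only [abs_mul])
    _ ≤ ∑ _i : Fin n, ‖p‖ * 1 + ‖p‖ := by gcongr with i; exacts [hw i, hxi i]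
    _ = (n + 1) * ‖p‖ := by simp; ring

variable {σ : ℝ → ℝ} {M R : ℝ} {x : Fin n → ℝ}

theorem abs_eval_add_sub_eval_le (h₀ : ∀ t, |σ t| ≤ M)
    (h₁ : ∀ s t, |σ s - σ t| ≤ M * |s - t|) (hx : x ∈ Set.Icc 0 1)
    {p : Param n N} (hp : ‖p‖ ≤ R) (k : Param n N) :
    |eval σ (p + k) x - eval σ p x| ≤ N * (M * (1 + R * (n + 1))) * ‖k‖ := by
  have hM : 0 ≤ M := (abs_nonneg _).trans (h₀ 0)
  have hR : 0 ≤ R := (norm_nonneg p).trans hp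
  rw [eval, eval, ← Finset.sum_sub_distrib, mul_assoc]
  refine abs_sum_le_card_mul fun j => ?_
  rw [preactivation_add, Prod.fst_add, Pi.add_apply]
  calc _ ≤ M * (|k.1 j| + |p.1 j| * |preactivation k j x|) := abs_neuron_add_sub_le h₀ h₁ ..
    _ ≤ M * (‖k‖ + R * ((n + 1) * ‖k‖)) := by
        gcongr
        exacts [abs_fst_apply_le_norm k j, (abs_fst_apply_le_norm p j).trans hp,
          abs_preactivation_le k j hx]
    _ = M * (1 + R * (n + 1)) * ‖k‖ := by ring

theorem abs_eval_second_difference_le (h₀ : ∀ t, |σ t| ≤ M)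
    (h₁ : ∀ s t, |σ s - σ t| ≤ M * |s - t|)
    (h₂ : ∀ u v d, |σ (u + d) - σ u - (σ (v + d) - σ v)| ≤ M * |u - v| * |d|)
    (hx : x ∈ Set.Icc 0 1) (p : Param n N) {q : Param n N} (hq : ‖q‖ ≤ R) (k : Param n N) :
    |(eval σ (p + k) x - eval σ p x) - (eval σ (q + k) x - eval σ q x)|
      ≤ N * (M * (n + 1) * (2 + R * (n + 1))) * ‖p - q‖ * ‖k‖ := by
  have hM : 0 ≤ M := (abs_nonneg _).trans (h₀ 0)
  have hR : 0 ≤ R := (norm_nonneg q).trans hq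
  simp only [eval, ← Finset.sum_sub_distrib]
  rw [mul_assoc, mul_assoc]
  refine abs_sum_le_card_mul fun j => ?_
  rw [preactivation_add, preactivation_add, Prod.fst_add, Prod.fst_add, Pi.add_apply,
    Pi.add_apply]
  calc _ ≤ M * (|k.1 j| * |preactivation p j x - preactivation q j x|
          + |p.1 j - q.1 j| * |preactivation k j x|
          + |q.1 j| * (|preactivation p j x - preactivation q j x| * |preactivation k j x|)) :=
        abs_neuron_second_difference_le h₁ h₂ ..
    _ ≤ M * (‖k‖ * ((n + 1) * ‖p - q‖) + ‖p - q‖ * ((n + 1) * ‖k‖)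
          + R * ((n + 1) * ‖p - q‖ * ((n + 1) * ‖k‖))) := by
        rw [← preactivation_sub, ← Pi.sub_apply, ← Prod.fst_sub]
        gcongr
        exacts [abs_fst_apply_le_norm k j, abs_preactivation_le _ j hx,
          abs_fst_apply_le_norm _ j, abs_preactivation_le k j hx,
          (abs_fst_apply_le_norm q j).trans hq, abs_preactivation_le _ j hx,
          abs_preactivation_le k j hx]
    _ = M * (n + 1) * (2 + R * (n + 1)) * (‖p - q‖ * ‖k‖) := by ring

end ShallowNetwork

open ShallowNetwork

open MeasureTheory in
/-- on every bounded convex set `U` of parameters, the derivative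
`DΨ[p]` of the shallow neural network operator is uniformly bounded and Lipschitz
continuous in `p` (in operator norm). -/
theorem stmt13 {n N : ℕ}
    (σ : ℝ → ℝ) (hσ : ContDiff ℝ 2 σ)
    (hσb : ∃ M : ℝ, ∀ t : ℝ, |σ t| ≤ M ∧ |deriv σ t| ≤ M ∧ |deriv (deriv σ) t| ≤ M)
    (μ : Measure (Fin n → ℝ)) (hμ : μ = volume.restrict (Set.Icc 0 1))
    (Ψ : (Fin N → ℝ) × (Fin N → Fin n → ℝ) × (Fin N → ℝ) → Lp ℝ 2 μ)
    (hΨ : ∀ (α : Fin N → ℝ) (w : Fin N → Fin n → ℝ) (θ : Fin N → ℝ),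
      (Ψ (α, w, θ) : (Fin n → ℝ) → ℝ)
        =ᵐ[μ] fun x => ∑ j, α j * σ ((∑ i, w j i * x i) + θ j))
    (DΨ : (Fin N → ℝ) × (Fin N → Fin n → ℝ) × (Fin N → ℝ) →
      ((Fin N → ℝ) × (Fin N → Fin n → ℝ) × (Fin N → ℝ)) →L[ℝ] Lp ℝ 2 μ)
    (hD : ∀ p, HasFDerivAt Ψ (DΨ p) p) :
    ∀ U : Set ((Fin N → ℝ) × (Fin N → Fin n → ℝ) × (Fin N → ℝ)),
      Bornology.IsBounded U → Convex ℝ U →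
      ∃ C_I C_L : ℝ, 0 < C_I ∧ 0 < C_L ∧
        ∀ p ∈ U, ∀ q ∈ U, ‖DΨ p‖ ≤ C_I ∧ ‖DΨ p - DΨ q‖ ≤ C_L * ‖p - q‖ := by
  intro U hU _
  subst hμ
  obtain ⟨M, hM⟩ := hσb
  have h₀ : ∀ t, |σ t| ≤ M := fun t => (hM t).1
  have h₁ := abs_sub_le_of_abs_deriv_le (hσ.differentiable two_ne_zero) fun t => (hM t).2.1
  have h₂ := abs_second_difference_le hσ fun t => (hM t).2.2
  obtain ⟨R, hR, hUR⟩ := hU.exists_pos_norm_le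
  have hΨ_sub : ∀ p p' : Param n N, ⇑(Ψ p' - Ψ p) =ᵐ[_] eval σ p' - eval σ p := fun p p' =>
    (Lp.coeFn_sub _ _).trans ((hΨ p'.1 p'.2.1 p'.2.2).sub (hΨ p.1 p.2.1 p.2.2))
  have hcube : ∀ᵐ x ∂volume.restrict (Set.Icc (0 : Fin n → ℝ) 1), x ∈ Set.Icc 0 1 :=
    ae_restrict_mem measurableSet_Icc
  have hM₀ : 0 ≤ M := (abs_nonneg _).trans (h₀ 0)
  set C_I : ℝ := N * (M * (1 + R * (n + 1)))
  set C_L : ℝ := N * (M * (n + 1) * (2 + R * (n + 1)))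
  have hC_I : 0 ≤ C_I := by positivity
  have hC_L : 0 ≤ C_L := by positivity
  refine ⟨C_I + 1, C_L + 1, by linarith, by linarith, fun p hp q hq => ⟨?_, ?_⟩⟩
  · refine ((hD p).norm_le_of_forall_norm_add_sub_le hC_I fun k => ?_).trans (by linarith)
    refine Lp.norm_le_of_ae_eq_of_norm_le (hΨ_sub _ _) (by positivity) ?_
    filter_upwards [hcube] with x hx
    exact abs_eval_add_sub_eval_le h₀ h₁ hx (hUR p hp) k
  · refine ((hD p).norm_sub_le_of_forall_norm_sub_sub_le (hD q)
      (mul_nonneg hC_L (norm_nonneg _)) fun k => ?_).trans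
      (mul_le_mul_of_nonneg_right (by linarith) (norm_nonneg _))
    refine Lp.norm_le_of_ae_eq_of_norm_le
      ((Lp.coeFn_sub _ _).trans ((hΨ_sub _ _).sub (hΨ_sub _ _))) (by positivity) ?_
    filter_upwards [hcube] with x hx
    exact abs_eval_second_difference_le h₀ h₁ h₂ hx p (hUR q hq) k
end
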